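/- If a hypergraph H contains a subhypergraph H' belonging to the family F_k, then Maker, moving first, can win the Maker-Breaker game on H in at most k of his moves: w_M^M(H) ≤ k. -/

import Mathlib

open scoped Classical

open scoped Classical

noncomputable section

/-- Minimax value of the Maker–Breaker game on hypergraph with edge set `E`:
`mbVal E t M B` is the minimum number of further moves Maker needs to claim all
vertices of some hyperedge (Maker has claimed `M`, Breaker has claimed `B`,
`t = true` iff Maker moves next), under optimal play; `⊤` if Maker cannot win. -/
def mbVal {V : Type} [Fintype V] (E : Set (Finset V)) :
    Bool → Finset V → Finset V → ℕ∞
  | true, M, B =>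
      if ∃ e ∈ E, e ⊆ M then 0
      else ⨅ v ∈ Finset.univ \ (M ∪ B), (1 + mbVal E false (insert v M) B)
  | false, M, B =>
      if ∃ e ∈ E, e ⊆ M then 0
      else if Finset.univ \ (M ∪ B) = ∅ then ⊤
      else ⨆ v ∈ Finset.univ \ (M ∪ B), mbVal E true M (insert v B)
termination_by _t M B => (Finset.univ \ (M ∪ B)).card
decreasing_by
  all_goals
    apply Finset.card_lt_card
    rw [Finset.ssubset_iff_of_subset]
    · refine ⟨v, ‹_›, by simp⟩
    · intro x hx
      simp only [Finset.mem_sdiff, Finset.mem_univ, true_and, Finset.mem_union,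
        Finset.mem_insert] at hx ⊢
      tauto

/-- The closed neighborhood of `v` as a finset. -/
def closedNbhdFinset {V : Type} [Fintype V] (G : SimpleGraph V) (v : V) : Finset V :=
  Finset.univ.filter (fun w => w = v ∨ G.Adj v w)

/-- The closed neighborhood hypergraph of a graph. -/
def nbhdHyp {V : Type} [Fintype V] (G : SimpleGraph V) : Set (Finset V) :=
  Set.range (closedNbhdFinset G)

/-- `γ'_SMB(G)`: the number of moves Staller (= Maker on the closed neighborhood
hypergraph, moving first) needs to win the Maker–Breaker domination game on `G`. -/
def gammaSMB' {V : Type} [Fintype V] (G : SimpleGraph V) : ℕ∞ :=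
  mbVal (nbhdHyp G) true ∅ ∅

end


/-- `FStar k VS E` says that the hypergraph with vertex set `VS` and hyperedge
set `E` is a member of the family `F_k^*`: `F_1^*` consists of the hypergraph
with one vertex `x` and one edge `{x}`; for `k ≥ 2`, a member of `F_k^*` is
obtained from disjoint members `A₁ ∈ F_{k-1}^*` and `A₂ ∈ ∪_{i<k} F_i^*` by
choosing edges `e₁ ∈ E(A₁)`, `e₂ ∈ E(A₂)`, adding a new origin vertex `u` and
replacing `eᵢ` by `eᵢ ∪ {u}`. -/
def FStar {V : Type} : ℕ → Set V → Set (Finset V) → Prop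
  | 0, _, _ => False
  | 1, VS, E => ∃ x : V, VS = {x} ∧ E = {{x}}
  | (k+2), VS, E => ∃ (u : V) (A B : Set V) (EA EB : Set (Finset V))
      (e₁ e₂ : Finset V),
      u ∈ VS ∧ A ∪ B = VS \ {u} ∧ Disjoint A B ∧
      (∀ e ∈ EA, ↑e ⊆ A) ∧ (∀ e ∈ EB, ↑e ⊆ B) ∧
      e₁ ∈ EA ∧ e₂ ∈ EB ∧
      FStar (k+1) A EA ∧
      (∃ i, ∃ _ : 1 ≤ i ∧ i ≤ k + 1, FStar i B EB) ∧
      E = (EA \ {e₁}) ∪ (EB \ {e₂}) ∪ {insert u e₁, insert u e₂}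
termination_by k _ _ => k
decreasing_by all_goals omega

/-- The hypergraph with vertex set `VS` and edge set `E` is a member of the
family `F_k = F_k^* \ (F_1 ∪ ⋯ ∪ F_{k-1})`. -/
def FFamilyAt (k : ℕ) {V : Type} (VS : Set V) (E : Set (Finset V)) : Prop :=
  FStar k VS E ∧ ∀ i < k, ¬ FStar i VS E

/-!
Maker claims the origin `u` of the member of `F_k^*`. The two edges through `u` shrink to
`e₁` and `e₂`, so what is left is a disjoint union of a member of `F_{k-1}^*` and one of
some `F_i^*` with `i < k`. Breaker's reply lies in at most one of the two, and Maker wins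
inside the other one by induction. Along the induction the subhypergraph is only a
subhypergraph "up to Maker's vertices": each of its edges contains the unclaimed part of
an edge of `H`.
-/

section MakerBreaker

variable {V : Type} {E : Set (Finset V)}

def ResiduallyContains (E : Set (Finset V)) (M : Finset V) (E' : Set (Finset V)) : Prop :=
  ∀ e ∈ E', ∃ f ∈ E, f \ M ⊆ e

lemma ResiduallyContains.of_subset {E' : Set (Finset V)} (h : E' ⊆ E) (M : Finset V) :
    ResiduallyContains E M E' :=
  fun e he => ⟨e, h he, Finset.sdiff_subset⟩

lemma ResiduallyContains.claim {M : Finset V} {E' S : Set (Finset V)}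
    (h : ResiduallyContains E M E') (u : V) (hS : ∀ e ∈ S, e ∈ E' ∨ insert u e ∈ E') :
    ResiduallyContains E (insert u M) S := by
  intro e he
  have hsub : ∀ f : Finset V, f \ M ⊆ insert u e → f \ insert u M ⊆ e := by
    intro f hf a ha
    simp only [Finset.mem_sdiff, Finset.mem_insert, not_or] at ha
    simpa [ha.2.1] using hf (Finset.mem_sdiff.2 ⟨ha.1, ha.2.2⟩)
  rcases hS e he with he' | he'
  · obtain ⟨f, hf, hfe⟩ := h e he'
    exact ⟨f, hf, hsub f (hfe.trans (Finset.subset_insert u e))⟩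
  · obtain ⟨f, hf, hfe⟩ := h _ he'
    exact ⟨f, hf, hsub f hfe⟩

variable [Fintype V]

lemma mbVal_true_le {M B : Finset V} {v : V} (hvM : v ∉ M) (hvB : v ∉ B) :
    mbVal E true M B ≤ 1 + mbVal E false (insert v M) B := by
  rw [mbVal]
  split
  · exact zero_le
  · exact iInf₂_le v (by simp [hvM, hvB])

lemma mbVal_false_le {M B : Finset V} {n : ℕ∞} {w : V} (hwM : w ∉ M) (hwB : w ∉ B)
    (h : ∀ v, v ∉ M → v ∉ B → mbVal E true M (insert v B) ≤ n) :
    mbVal E false M B ≤ n := by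
  rw [mbVal]
  split
  · exact zero_le
  · rw [if_neg (Finset.nonempty_iff_ne_empty.1 ⟨w, by simp [hwM, hwB]⟩)]
    refine iSup₂_le fun v hv => h v ?_ ?_ <;> simp_all

lemma ResiduallyContains.mbVal_eq_zero {M B e : Finset V} {E' : Set (Finset V)}
    (h : ResiduallyContains E M E') (he : e ∈ E') (heM : e ⊆ M) (t : Bool) :
    mbVal E t M B = 0 := by
  obtain ⟨f, hf, hfe⟩ := h e he
  have hfM : f ⊆ M := fun a ha => by
    by_contra haM
    exact haM (heM (hfe (Finset.mem_sdiff.2 ⟨ha, haM⟩)))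
  cases t <;> rw [mbVal, if_pos ⟨f, hf, hfM⟩]

end MakerBreaker

lemma FStar.nonempty {V : Type} : ∀ {k : ℕ} {VS : Set V} {E' : Set (Finset V)},
    FStar k VS E' → VS.Nonempty
  | 0, _, _, h => by rw [FStar] at h; exact h.elim
  | 1, _, _, h => by
    rw [FStar] at h
    obtain ⟨x, rfl, -⟩ := h
    exact Set.singleton_nonempty x
  | _ + 2, _, _, h => by
    rw [FStar] at h
    obtain ⟨u, -, -, -, -, -, -, hu, -⟩ := h
    exact ⟨u, hu⟩

lemma disjoint_insert_insert_of_subset {V : Type} {VS A : Set V} {M B : Finset V} {u v : V}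
    (hfree : Disjoint VS ↑(M ∪ B)) (hA : A ⊆ VS \ {u}) (hvA : v ∉ A) :
    Disjoint A ↑(insert u M ∪ insert v B) := by
  rw [Set.disjoint_left] at hfree ⊢
  intro w hw
  have hwVS := hA hw
  have hwMB := hfree hwVS.1
  simp only [Finset.coe_union, Finset.coe_insert, Set.mem_union, Set.mem_insert_iff,
    Finset.mem_coe, not_or] at hwMB ⊢
  exact ⟨⟨hwVS.2, hwMB.1⟩, fun hwv => hvA (hwv ▸ hw), hwMB.2⟩

theorem mbVal_le_of_FStar {V : Type} [Fintype V] (E : Set (Finset V)) :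
    ∀ (k : ℕ) {VS : Set V} {E' : Set (Finset V)} {M B : Finset V},
      FStar k VS E' → Disjoint VS ↑(M ∪ B) → ResiduallyContains E M E' →
      mbVal E true M B ≤ k
  | 0, _, _, _, _, h, _, _ => by rw [FStar] at h; exact h.elim
  | 1, VS, E', M, B, h, hfree, hE' => by
    rw [FStar] at h
    obtain ⟨x, rfl, rfl⟩ := h
    have hx : x ∉ M ∧ x ∉ B := by simpa using Set.disjoint_left.1 hfree rfl
    have hwin : mbVal E false (insert x M) B = 0 :=
      (hE'.claim x (S := {∅}) (by simp)).mbVal_eq_zero rfl (Finset.empty_subset _) false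
    calc mbVal E true M B ≤ 1 + mbVal E false (insert x M) B := mbVal_true_le hx.1 hx.2
      _ = 1 := by simp [hwin]
  | k + 2, VS, E', M, B, h, hfree, hE' => by
    rw [FStar] at h
    obtain ⟨u, A₁, A₂, E₁, E₂, e₁, e₂, hu, hunion, hdisj, -, -, -, -, hA₁,
      ⟨i, ⟨-, hik⟩, hA₂⟩, rfl⟩ := h
    have huMB : u ∉ M ∧ u ∉ B := by simpa using Set.disjoint_left.1 hfree hu
    have hE₁ : ResiduallyContains E (insert u M) E₁ := hE'.claim u fun e he => by
      by_cases h : e = e₁ <;> simp_all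
    have hE₂ : ResiduallyContains E (insert u M) E₂ := hE'.claim u fun e he => by
      by_cases h : e = e₂ <;> simp_all
    have hA₁VS : A₁ ⊆ VS \ {u} := hunion ▸ Set.subset_union_left
    have hA₂VS : A₂ ⊆ VS \ {u} := hunion ▸ Set.subset_union_right
    obtain ⟨a, ha⟩ := hA₁.nonempty
    have haMB : a ∉ insert u M ∧ a ∉ B := by
      obtain ⟨haVS, hau⟩ := hA₁VS ha
      have : a ∉ M ∧ a ∉ B := by simpa using Set.disjoint_left.1 hfree haVS
      simpa [Set.mem_singleton_iff.not.1 hau] using this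
    have hbreaker : mbVal E false (insert u M) B ≤ (k + 1 : ℕ) :=
      mbVal_false_le haMB.1 haMB.2 fun v _ _ => by
        by_cases hvA₁ : v ∈ A₁
        · have hvA₂ : v ∉ A₂ := Set.disjoint_left.1 hdisj hvA₁
          calc mbVal E true (insert u M) (insert v B) ≤ i :=
                mbVal_le_of_FStar E i hA₂
                  (disjoint_insert_insert_of_subset hfree hA₂VS hvA₂) hE₂
            _ ≤ (k + 1 : ℕ) := by exact_mod_cast hik
        · exact mbVal_le_of_FStar E (k + 1) hA₁
            (disjoint_insert_insert_of_subset hfree hA₁VS hvA₁) hE₁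
    calc mbVal E true M B ≤ 1 + mbVal E false (insert u M) B := mbVal_true_le huMB.1 huMB.2
      _ ≤ 1 + (k + 1 : ℕ) := by gcongr
      _ = (k + 2 : ℕ) := by push_cast; ring
termination_by k => k

theorem stmt_9_general {W : Type} [Fintype W] (E : Set (Finset W)) (k : ℕ)
    (h : ∃ (VS : Set W) (E' : Set (Finset W)), E' ⊆ E ∧ FFamilyAt k VS E') :
    mbVal E true ∅ ∅ ≤ (k : ℕ∞) := by
  obtain ⟨VS, E', hE'E, hF, -⟩ := h
  exact mbVal_le_of_FStar E k hF (by simp) (.of_subset hE'E ∅)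

/-- If a hypergraph `H` (with vertex type `W` and edge set `E`) contains a
subhypergraph belonging to the family `F_k`, then Maker, moving first, wins the
Maker–Breaker game on `H` in at most `k` of his moves: `w_M^M(H) ≤ k`. -/
theorem stmt_9 {W : Type} [Fintype W] (E : Set (Finset W)) (k : ℕ) (hk : 1 ≤ k)
    (h : ∃ (VS : Set W) (E' : Set (Finset W)), E' ⊆ E ∧ FFamilyAt k VS E') :
    mbVal E true ∅ ∅ ≤ (k : ℕ∞) :=
  stmt_9_general E k h
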